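/- arXiv:2411.04767 — 2 statements merged into one kernel-verified Lean document; each statement's English description precedes it below -/
import Mathlib

section
/- Holevo–Helstrom theorem (achievability part): Let ρ₀, ρ₁ be density matrices on ℂ^d and λ ∈ [0,1]. Then there exist d×d complex matrices P₀, P₁ that are orthogonal projections (Hermitian idempotents) with P₀ + P₁ = I such that λ·Tr(P₀ρ₀) + (1−λ)·Tr(P₁ρ₁) = 1/2 + (1/2)·‖λρ₀ − (1−λ)ρ₁‖₁. -/
open Matrix BigOperators
open scoped ComplexOrder

open Classical in
noncomputable def msqrt {n : Type*} [Fintype n] [DecidableEq n] (A : Matrix n n ℂ) :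
    Matrix n n ℂ :=
  if h : A.PosSemidef then
    h.1.eigenvectorUnitary.1 * diagonal ((↑) ∘ (√·) ∘ h.1.eigenvalues) *
      (star h.1.eigenvectorUnitary : Matrix n n ℂ)
  else 0

noncomputable def traceNorm {n : Type*} [Fintype n] [DecidableEq n] (A : Matrix n n ℂ) : ℝ :=
  (msqrt (Aᴴ * A)).trace.re

noncomputable def fidelity {n : Type*} [Fintype n] [DecidableEq n] (ρ₀ ρ₁ : Matrix n n ℂ) : ℝ :=
  ((msqrt (msqrt ρ₀ * ρ₁ * msqrt ρ₀)).trace.re) ^ 2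

noncomputable def tensorPow {d : ℕ} (ρ : Matrix (Fin d) (Fin d) ℂ) (n : ℕ) :
    Matrix (Fin n → Fin d) (Fin n → Fin d) ℂ :=
  Matrix.of fun i j => ∏ k, ρ (i k) (j k)

/-! With `Δ = λρ₀ - (1 - λ)ρ₁`, take `P₀` to be the spectral projection of the Hermitian matrix `Δ`
onto `[0, ∞)` and `P₁ = 1 - P₀`. Then `P₀Δ = Δ⁺`, so the success probability is
`Tr(P₀Δ) + (1 - λ) Tr ρ₁ = Tr Δ⁺ + 1 - λ`, and `Tr Δ⁺ = (‖Δ‖₁ + Tr Δ) / 2` with `Tr Δ = 2λ - 1`.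
The trace norm is `Tr |Δ|` because the square root in its definition is the CFC square root. -/

open scoped MatrixOrder

namespace Matrix

variable {n : Type*} [Fintype n] [DecidableEq n]

lemma PosSemidef.msqrt_eq_sqrt {A : Matrix n n ℂ} (hA : A.PosSemidef) : msqrt A = CFC.sqrt A := by
  rw [msqrt, dif_pos hA, CFC.sqrt_eq_real_sqrt A hA.nonneg, cfcₙ_eq_cfc (hf0 := by simp),
    hA.1.cfc_eq]
  rfl

lemma traceNorm_eq_re_trace_abs (A : Matrix n n ℂ) : traceNorm A = (CFC.abs A).trace.re := by
  rw [traceNorm, (posSemidef_conjTranspose_mul_self A).msqrt_eq_sqrt]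
  rfl

variable {𝕜 : Type*} [RCLike 𝕜]

lemma IsHermitian.exists_isIdempotentElem_mul_eq_posPart {A : Matrix n n 𝕜} (hA : A.IsHermitian) :
    ∃ P : Matrix n n 𝕜, P.IsHermitian ∧ IsIdempotentElem P ∧ P * A = A⁺ := by
  set f : ℝ → ℝ := Set.indicator (Set.Ici 0) 1
  have hf : ContinuousOn f (spectrum ℝ A) := A.finite_real_spectrum.continuousOn f
  refine ⟨cfc f A, cfc_predicate f A, ?_, ?_⟩
  · rw [IsIdempotentElem, ← cfc_mul f f A]
    congr 1
    ext x
    by_cases hx : 0 ≤ x <;> simp [f, hx]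
  · rw [CFC.posPart_def, cfcₙ_eq_cfc (hf0 := by simp)]
    nth_rw 2 [← cfc_id ℝ A (ha := hA.isSelfAdjoint)]
    rw [← cfc_mul f id A]
    congr 1
    ext x
    rcases le_or_gt 0 x with hx | hx
    · simp [f, hx, posPart_of_nonneg]
    · simp [f, hx.not_ge, posPart_of_nonpos hx.le]

lemma IsHermitian.trace_posPart {A : Matrix n n 𝕜} (hA : A.IsHermitian) :
    A⁺.trace = ((CFC.abs A).trace + A.trace) / 2 := by
  rw [eq_div_iff two_ne_zero, ← trace_add, CFC.abs_add_self A hA.isSelfAdjoint, trace_smul,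
    two_smul, mul_two]

end Matrix

theorem holevo_helstrom_achievability_general {d : ℕ} (ρ₀ ρ₁ : Matrix (Fin d) (Fin d) ℂ)
    (hρ₀ : ρ₀.PosSemidef) (hρ₀t : ρ₀.trace = 1)
    (hρ₁ : ρ₁.PosSemidef) (hρ₁t : ρ₁.trace = 1)
    (l : ℝ) :
    ∃ P₀ P₁ : Matrix (Fin d) (Fin d) ℂ,
      P₀.IsHermitian ∧ P₁.IsHermitian ∧ P₀ * P₀ = P₀ ∧ P₁ * P₁ = P₁ ∧ P₀ + P₁ = 1 ∧
      l * ((P₀ * ρ₀).trace).re + (1 - l) * ((P₁ * ρ₁).trace).re =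
        1 / 2 + (1 / 2) * traceNorm ((l : ℂ) • ρ₀ - ((1 - l : ℝ) : ℂ) • ρ₁) := by
  set Δ := (l : ℂ) • ρ₀ - ((1 - l : ℝ) : ℂ) • ρ₁
  have hΔ : Δ.IsHermitian :=
    (hρ₀.1.smul (Complex.conj_ofReal l)).sub (hρ₁.1.smul (Complex.conj_ofReal _))
  obtain ⟨P, hP, hPP, hPΔ⟩ := hΔ.exists_isIdempotentElem_mul_eq_posPart
  refine ⟨P, 1 - P, hP, isHermitian_one.sub hP, hPP, hPP.one_sub, add_sub_cancel P 1, ?_⟩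
  have hΔt : Δ.trace = 2 * l - 1 := by
    simp only [Δ, trace_sub, trace_smul, hρ₀t, hρ₁t, smul_eq_mul]
    push_cast
    ring
  have hvalue : (l : ℂ) * (P * ρ₀).trace + ((1 - l : ℝ) : ℂ) * ((1 - P) * ρ₁).trace
      = ((CFC.abs Δ).trace + 1) / 2 := calc
    _ = (P * Δ).trace + ((1 - l : ℝ) : ℂ) := by
      simp only [Δ, Matrix.mul_sub, Matrix.sub_mul, Matrix.mul_smul, trace_sub, trace_smul,
        Matrix.one_mul, hρ₁t, smul_eq_mul]
      ring
    _ = ((CFC.abs Δ).trace + 1) / 2 := by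
      rw [hPΔ, hΔ.trace_posPart, hΔt]
      push_cast
      ring
  have hre := congrArg Complex.re hvalue
  simp only [Complex.add_re, Complex.re_ofReal_mul, Complex.div_ofNat_re, Complex.one_re] at hre
  rw [traceNorm_eq_re_trace_abs]
  linarith

/-- Holevo–Helstrom theorem (achievability part). -/
theorem holevo_helstrom_achievability {d : ℕ} (ρ₀ ρ₁ : Matrix (Fin d) (Fin d) ℂ)
    (hρ₀ : ρ₀.PosSemidef) (hρ₀t : ρ₀.trace = 1)
    (hρ₁ : ρ₁.PosSemidef) (hρ₁t : ρ₁.trace = 1)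
    (l : ℝ) (hl0 : 0 ≤ l) (hl1 : l ≤ 1) :
    ∃ P₀ P₁ : Matrix (Fin d) (Fin d) ℂ,
      P₀.IsHermitian ∧ P₁.IsHermitian ∧ P₀ * P₀ = P₀ ∧ P₁ * P₁ = P₁ ∧ P₀ + P₁ = 1 ∧
      l * ((P₀ * ρ₀).trace).re + (1 - l) * ((P₁ * ρ₁).trace).re =
        1 / 2 + (1 / 2) * traceNorm ((l : ℂ) • ρ₀ - ((1 - l : ℝ) : ℂ) • ρ₁) :=
  holevo_helstrom_achievability_general ρ₀ ρ₁ hρ₀ hρ₀t hρ₁ hρ₁t l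
end

section
/- Existence of a state at a prescribed trace distance: Let d ≥ 2, let φ be a density matrix on ℂ^d, and let ε be a real number with 0 ≤ ε ≤ 1 − 1/d. Then there exists a density matrix ρ on ℂ^d with (1/2)·‖ρ − φ‖₁ = ε. -/
open Matrix BigOperators
open scoped ComplexOrder

/-!
Diagonalize `φ = U diag(λ) U*`. For a probability vector `q`, the state `U diag(q) U*` commutes
with `φ`, and its trace distance to `φ` is the classical distance `½ ∑ |qᵢ - λᵢ|`. Some eigenvalue
satisfies `λᵢ₀ ≤ 1/d`, and along the segment from `λ` to the point mass at `i₀` this distance grows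
linearly from `0` to `1 - λᵢ₀ ≥ 1 - 1/d`.
-/

open scoped MatrixOrder

lemma sum_abs_single_sub_of_mem_stdSimplex {ι : Type*} [Fintype ι] [DecidableEq ι] {p : ι → ℝ}
    (hp : p ∈ stdSimplex ℝ ι) (i₀ : ι) :
    ∑ i, |(Pi.single i₀ 1 : ι → ℝ) i - p i| = 2 * (1 - p i₀) := by
  obtain ⟨hp0, hp1⟩ := hp
  have hrest : ∑ i ∈ {i₀}ᶜ, p i = 1 - p i₀ := by
    rw [← hp1, Fintype.sum_eq_add_sum_compl i₀ p, add_sub_cancel_left]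
  have hle : p i₀ ≤ 1 := by
    linarith [Finset.sum_nonneg fun i (_ : i ∈ ({i₀}ᶜ : Finset ι)) => hp0 i]
  rw [Fintype.sum_eq_add_sum_compl i₀, Pi.single_eq_same, abs_of_nonneg (sub_nonneg.2 hle),
    Finset.sum_congr rfl fun i hi => by
      rw [Pi.single_eq_of_ne (by simpa using hi), zero_sub, abs_neg, abs_of_nonneg (hp0 i)],
    hrest]
  ring

lemma exists_mem_stdSimplex_sum_abs_sub_eq {ι : Type*} [Fintype ι] [DecidableEq ι] {p : ι → ℝ}
    (hp : p ∈ stdSimplex ℝ ι) (i₀ : ι) {ε : ℝ} (hε0 : 0 ≤ ε) (hε : ε ≤ 1 - p i₀) :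
    ∃ q ∈ stdSimplex ℝ ι, ∑ i, |q i - p i| = 2 * ε := by
  -- if `p i₀ = 1` then `ε = 0`, and the junk value `t = 0` is the right one
  set t := ε / (1 - p i₀)
  have ht0 : 0 ≤ t := div_nonneg hε0 (hε0.trans hε)
  have ht1 : t ≤ 1 := div_le_one_of_le₀ hε (hε0.trans hε)
  refine ⟨(1 - t) • p + t • Pi.single i₀ 1, ?_, ?_⟩
  · exact convex_stdSimplex ℝ ι hp (single_mem_stdSimplex ℝ i₀) (sub_nonneg.2 ht1) ht0
      (sub_add_cancel 1 t)
  · calc ∑ i, |((1 - t) • p + t • Pi.single i₀ 1 : ι → ℝ) i - p i|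
          = ∑ i, t * |(Pi.single i₀ 1 : ι → ℝ) i - p i| := by
            refine Finset.sum_congr rfl fun i _ => ?_
            rw [← abs_of_nonneg ht0, ← abs_mul, abs_of_nonneg ht0]
            simp only [Pi.add_apply, Pi.smul_apply, smul_eq_mul]
            ring_nf
      _ = 2 * (t * (1 - p i₀)) := by
            rw [← Finset.mul_sum, sum_abs_single_sub_of_mem_stdSimplex hp]
            ring
      _ = 2 * ε := by rw [div_mul_cancel_of_imp fun h => by linarith]

lemma exists_le_inv_card_of_sum_eq_one {ι : Type*} [Fintype ι] [Nonempty ι] {p : ι → ℝ}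
    (hp1 : ∑ i, p i = 1) : ∃ i, p i ≤ 1 / Fintype.card ι := by
  obtain ⟨i, -, hi⟩ := Finset.exists_le_of_sum_le (f := p)
    (g := fun _ => 1 / (Fintype.card ι : ℝ)) Finset.univ_nonempty (by simp [hp1])
  exact ⟨i, hi⟩

namespace Matrix

variable {n : Type*} [Fintype n] [DecidableEq n]

lemma traceNorm_eq_re_trace_sqrt (A : Matrix n n ℂ) :
    traceNorm A = (CFC.sqrt (Aᴴ * A)).trace.re := by
  rw [traceNorm, (posSemidef_conjTranspose_mul_self A).msqrt_eq_sqrt]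

lemma trace_conjStarAlgAut (U : unitary (Matrix n n ℂ)) (A : Matrix n n ℂ) :
    (Unitary.conjStarAlgAut ℂ _ U A).trace = A.trace := by
  rw [Unitary.conjStarAlgAut_apply, trace_mul_cycle, Unitary.coe_star_mul_self, one_mul]

lemma conjStarAlgAut_diagonal_nonneg (U : unitary (Matrix n n ℂ)) {μ : n → ℝ}
    (hμ : ∀ i, 0 ≤ μ i) : 0 ≤ Unitary.conjStarAlgAut ℂ _ U (diagonal (RCLike.ofReal ∘ μ)) := by
  rw [Unitary.conjStarAlgAut_apply]
  refine star_right_conjugate_nonneg ?_ _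
  rw [nonneg_iff_posSemidef, posSemidef_diagonal_iff]
  exact fun i => by simpa using hμ i

lemma traceNorm_conjStarAlgAut_diagonal (U : unitary (Matrix n n ℂ)) (μ : n → ℝ) :
    traceNorm (Unitary.conjStarAlgAut ℂ _ U (diagonal (RCLike.ofReal ∘ μ))) = ∑ i, |μ i| := by
  set conj := Unitary.conjStarAlgAut ℂ (Matrix n n ℂ) U
  set D : Matrix n n ℂ := diagonal (RCLike.ofReal ∘ μ)
  have hsqrt : CFC.sqrt ((conj D)ᴴ * conj D) = conj (diagonal (RCLike.ofReal ∘ fun i => |μ i|)) := by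
    refine CFC.sqrt_unique ?_ (conjStarAlgAut_diagonal_nonneg U fun i => abs_nonneg _)
    rw [← star_eq_conjTranspose, ← map_star, ← map_mul, ← map_mul, star_eq_conjTranspose,
      diagonal_conjTranspose, diagonal_mul_diagonal, diagonal_mul_diagonal]
    congr 2
    funext i
    simp [← Complex.ofReal_mul, abs_mul_abs_self]
  rw [traceNorm_eq_re_trace_sqrt, hsqrt, trace_conjStarAlgAut, trace_diagonal]
  simp

end Matrix

theorem exists_state_at_trace_distance_general {d : ℕ}
    (φ : Matrix (Fin d) (Fin d) ℂ) (hφ : φ.PosSemidef) (hφt : φ.trace = 1)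
    (ε : ℝ) (hε0 : 0 ≤ ε) (hε1 : ε ≤ 1 - 1 / d) :
    ∃ ρ : Matrix (Fin d) (Fin d) ℂ,
      ρ.PosSemidef ∧ ρ.trace = 1 ∧ (1 / 2) * traceNorm (ρ - φ) = ε := by
  have : NeZero d := ⟨by rintro rfl; simp at hφt⟩
  set μ := hφ.1.eigenvalues
  set conj := Unitary.conjStarAlgAut ℂ _ hφ.1.eigenvectorUnitary
  have hμ : μ ∈ stdSimplex ℝ (Fin d) := by
    refine ⟨hφ.eigenvalues_nonneg, ?_⟩
    have := hφ.1.trace_eq_sum_eigenvalues.symm.trans hφt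
    rwa [← RCLike.ofReal_sum, ← RCLike.ofReal_one, RCLike.ofReal_inj] at this
  obtain ⟨i₀, hi₀⟩ := exists_le_inv_card_of_sum_eq_one hμ.2
  rw [Fintype.card_fin] at hi₀
  obtain ⟨q, ⟨hq0, hq1⟩, hdist⟩ := exists_mem_stdSimplex_sum_abs_sub_eq hμ i₀ hε0 (by linarith)
  refine ⟨conj (Matrix.diagonal (RCLike.ofReal ∘ q)), ?_, ?_, ?_⟩
  · exact (Matrix.conjStarAlgAut_diagonal_nonneg _ hq0).posSemidef
  · rw [Matrix.trace_conjStarAlgAut, Matrix.trace_diagonal]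
    simp only [Function.comp_apply, ← RCLike.ofReal_sum, hq1, RCLike.ofReal_one]
  · have hdiag : Matrix.diagonal (RCLike.ofReal ∘ q) - Matrix.diagonal (RCLike.ofReal ∘ μ)
        = (Matrix.diagonal (RCLike.ofReal ∘ (q - μ)) : Matrix (Fin d) (Fin d) ℂ) := by
      rw [Matrix.diagonal_sub]; congr 1; ext i; simp
    conv_lhs => rw [hφ.1.spectral_theorem]
    rw [← map_sub, hdiag, Matrix.traceNorm_conjStarAlgAut_diagonal]
    simp only [Pi.sub_apply, hdist]
    ring

/-- Existence of a state at a prescribed trace distance. -/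
theorem exists_state_at_trace_distance {d : ℕ} (hd : 2 ≤ d)
    (φ : Matrix (Fin d) (Fin d) ℂ) (hφ : φ.PosSemidef) (hφt : φ.trace = 1)
    (ε : ℝ) (hε0 : 0 ≤ ε) (hε1 : ε ≤ 1 - 1 / d) :
    ∃ ρ : Matrix (Fin d) (Fin d) ℂ,
      ρ.PosSemidef ∧ ρ.trace = 1 ∧ (1 / 2) * traceNorm (ρ - φ) = ε :=
  exists_state_at_trace_distance_general φ hφ hφt ε hε0 hε1
end
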